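/- arXiv:2106.09135 — 4 statements merged into one kernel-verified Lean document; each statement's English description precedes it below -/
import Mathlib

section
/- Let sigma : ℝ → ℝ be a continuous sigmoidal function, i.e. sigma tends to 0 at negative infinity and to 1 at positive infinity. Then for every continuous function f : [0,1]^n → ℝ and every ε > 0 there exist a natural number N, real coefficients α_1, …, α_N, vectors w_1, …, w_N ∈ ℝ^n, and real biases b_1, …, b_N such that |∑_{j=1}^N α_j · sigma(⟨w_j, x⟩ + b_j) − f(x)| ≤ ε for all x ∈ [0,1]^n. -/
open Filter Finset

lemma sigma_tail (sigma : ℝ → ℝ)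
    (hσ_bot : Tendsto sigma atBot (nhds 0)) (hσ_top : Tendsto sigma atTop (nhds 1))
    (η : ℝ) (hη : 0 < η) :
    ∃ S : ℝ, 0 < S ∧ (∀ s, S ≤ s → |sigma s - 1| ≤ η) ∧ (∀ s, s ≤ -S → |sigma s| ≤ η) := by
  have h1 : ∀ᶠ s in atTop, |sigma s - 1| ≤ η := by
    have := Metric.tendsto_nhds.mp hσ_top η hη
    filter_upwards [this] with s hs
    simpa [Real.dist_eq] using hs.le
  have h2 : ∀ᶠ s in atBot, |sigma s| ≤ η := by
    have := Metric.tendsto_nhds.mp hσ_bot η hη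
    filter_upwards [this] with s hs
    simpa [Real.dist_eq] using hs.le
  obtain ⟨S1, hS1⟩ := eventually_atTop.mp h1
  obtain ⟨S2, hS2⟩ := eventually_atBot.mp h2
  refine ⟨max 1 (max S1 (-S2)), by positivity, fun s hs => hS1 s ?_, fun s hs => hS2 s ?_⟩
  · exact le_trans (le_max_left _ _ |>.trans (le_max_right _ _)) hs
  · nlinarith [le_max_right S1 (-S2), le_max_right (1:ℝ) (max S1 (-S2))]

lemma sigma_bdd (sigma : ℝ → ℝ) (hσ_cont : Continuous sigma)
    (hσ_bot : Tendsto sigma atBot (nhds 0)) (hσ_top : Tendsto sigma atTop (nhds 1)) :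
    ∃ M : ℝ, 0 < M ∧ ∀ s, |sigma s| ≤ M := by
  obtain ⟨S, hS, h1, h2⟩ := sigma_tail sigma hσ_bot hσ_top 1 one_pos
  obtain ⟨C, hC⟩ := (isCompact_Icc (a := -S) (b := S)).exists_bound_of_continuousOn
    hσ_cont.continuousOn
  refine ⟨max (C + 1) 2, by positivity, fun s => ?_⟩
  rcases le_total s (-S) with h | h
  · exact (h2 s h).trans (le_trans one_le_two (le_max_right _ _))
  rcases le_total S s with h' | h'
  · have h3 := h1 s h'
    have : |sigma s| ≤ 2 := by
      have := abs_sub_abs_le_abs_sub (sigma s) 1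
      simp at this ⊢
      nlinarith [abs_nonneg (sigma s - 1)]
    exact this.trans (le_max_right _ _)
  · have := hC s ⟨h, h'⟩
    simp only [Real.norm_eq_abs] at this
    exact this.trans ((le_add_of_nonneg_right zero_le_one).trans (le_max_left _ _))

set_option maxHeartbeats 1000000 in
lemma one_dim (sigma : ℝ → ℝ) (hσ_cont : Continuous sigma)
    (hσ_bot : Tendsto sigma atBot (nhds 0)) (hσ_top : Tendsto sigma atTop (nhds 1))
    (g : ℝ → ℝ) (hg : Continuous g) (R : ℝ) (hR : 0 < R) (ε : ℝ) (hε : 0 < ε) :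
    ∃ (N : ℕ) (α lam b : Fin N → ℝ), ∀ t ∈ Set.Icc (-R) R,
      |(∑ j, α j * sigma (lam j * t + b j)) - g t| ≤ ε := by
  obtain ⟨M, hM, hMb⟩ := sigma_bdd sigma hσ_cont hσ_bot hσ_top
  set ε' : ℝ := ε / (3 * (M + 1)) with hε'def
  have hε' : 0 < ε' := by positivity
  -- uniform continuity modulus on J = [-R-1, R+1]
  set J : Set ℝ := Set.Icc (-R - 1) (R + 1) with hJdef
  have hJc : IsCompact J := isCompact_Icc
  have huc := Metric.uniformContinuousOn_iff_le.mp
    (hJc.uniformContinuousOn_of_continuous hg.continuousOn) ε' hε'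
  obtain ⟨δ0, hδ0, hmod⟩ := huc
  set δ : ℝ := min δ0 1 with hδdef
  have hδpos : 0 < δ := lt_min hδ0 one_pos
  have hδ1 : δ ≤ 1 := min_le_right _ _
  have hδδ0 : δ ≤ δ0 := min_le_left _ _
  set δ' : ℝ := δ / 2 with hδ'def
  have hδ'pos : 0 < δ' := by positivity
  -- bound on g over J
  obtain ⟨C, hC⟩ := hJc.exists_bound_of_continuousOn hg.continuousOn
  set G : ℝ := max C 0 with hGdef
  have hG0 : 0 ≤ G := le_max_right _ _
  have hGb : ∀ s ∈ J, |g s| ≤ G := fun s hs => by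
    have := hC s hs; rw [Real.norm_eq_abs] at this; exact this.trans (le_max_left _ _)
  -- grid
  set m : ℕ := ⌈2 * R / δ'⌉₊ with hmdef
  have hm1 : 1 ≤ m := Nat.one_le_ceil_iff.mpr (by positivity)
  have hm2 : 2 * R ≤ m * δ' := by
    rw [← div_le_iff₀ hδ'pos]; exact Nat.le_ceil _
  have hm3 : (m : ℝ) * δ' ≤ 2 * R + δ' := by
    have := (Nat.ceil_lt_add_one (by positivity : (0:ℝ) ≤ 2 * R / δ')).le
    calc (m : ℝ) * δ' ≤ (2 * R / δ' + 1) * δ' := by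
          apply mul_le_mul_of_nonneg_right this hδ'pos.le
      _ = 2 * R + δ' := by field_simp
  set η : ℝ := ε / (3 * (m + 1) * (2 * G + 1)) with hηdef
  have hη : 0 < η := by positivity
  obtain ⟨S, hSpos, hStop, hSbot⟩ := sigma_tail sigma hσ_bot hσ_top η hη
  set lam0 : ℝ := 2 * S / δ' with hlam0def
  have hlam0 : 0 < lam0 := by positivity
  set tk : ℕ → ℝ := fun k => -R + k * δ' with htkdef
  have htk_mem : ∀ k ≤ m, tk k ∈ J := by
    intro k hk
    constructor
    · simp only [htkdef]; nlinarith [Nat.cast_nonneg (α := ℝ) k]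
    · have : (k : ℝ) * δ' ≤ m * δ' := by
        apply mul_le_mul_of_nonneg_right (by exact_mod_cast hk) hδ'pos.le
      simp only [htkdef]
      nlinarith [hδ'pos.le, hδ1]
  have hΔ : ∀ k, k < m → |g (tk (k + 1)) - g (tk k)| ≤ ε' := by
    intro k hk
    have h1 := htk_mem k hk.le
    have h2 := htk_mem (k + 1) hk
    have : dist (tk (k + 1)) (tk k) ≤ δ0 := by
      rw [Real.dist_eq]
      have : tk (k + 1) - tk k = δ' := by simp [htkdef]; push_cast; ring
      rw [this, abs_of_pos hδ'pos]
      linarith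
    simpa [Real.dist_eq] using hmod _ h2 _ h1 this
  have hΔG : ∀ k, k < m → |g (tk (k + 1)) - g (tk k)| ≤ 2 * G := by
    intro k hk
    have := hGb _ (htk_mem (k+1) hk)
    have := hGb _ (htk_mem k hk.le)
    calc |g (tk (k+1)) - g (tk k)| ≤ |g (tk (k+1))| + |g (tk k)| := abs_sub _ _
      _ ≤ 2 * G := by linarith
  clear_value ε' δ δ' G m η lam0 tk
  -- the network
  refine ⟨m + 1, Fin.cases (g (tk 0)) (fun k : Fin m => g (tk (k + 1)) - g (tk k)),
    Fin.cases 0 (fun _ => lam0),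
    Fin.cases S (fun k : Fin m => -(lam0 * tk (k + 1))), ?_⟩
  intro t ht
  obtain ⟨htl, htr⟩ := ht
  have htJ : t ∈ J := ⟨by linarith, by linarith⟩
  -- rewrite the network sum
  rw [Fin.sum_univ_succ]
  simp only [Fin.cases_zero, Fin.cases_succ]
  rw [Fin.sum_univ_eq_sum_range (fun k => (g (tk (k + 1)) - g (tk k)) *
    sigma (lam0 * t + -(lam0 * tk (k + 1)))) m]
  -- step functions
  set c : ℝ := t - δ' / 2 with hcdef
  set χ : ℕ → ℝ := fun j => if tk j ≤ c then 1 else 0 with hχdef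
  set K : ℕ := min m ⌊(t + R - δ' / 2) / δ'⌋₊ with hKdef
  clear_value c χ K
  have hfilter : (range m).filter (fun k => tk (k + 1) ≤ c) = range K := by
    ext k
    simp only [mem_filter, mem_range, hKdef, lt_min_iff]
    constructor
    · rintro ⟨hk, hle⟩
      refine ⟨hk, ?_⟩
      have h2 : ((k : ℝ) + 1) * δ' ≤ t + R - δ' / 2 := by
        simp only [htkdef] at hle; push_cast at hle; linarith [hcdef]
      have h3 : ((k + 1 : ℕ) : ℝ) ≤ (t + R - δ' / 2) / δ' := by
        rw [le_div_iff₀ hδ'pos]; push_cast; linarith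
      have := (Nat.le_floor_iff' (Nat.succ_ne_zero k)).mpr h3
      omega
    · rintro ⟨hk, hF⟩
      refine ⟨hk, ?_⟩
      have h1 : ((k + 1 : ℕ) : ℝ) ≤ (t + R - δ' / 2) / δ' :=
        (Nat.le_floor_iff' (Nat.succ_ne_zero k)).mp (by omega)
      rw [le_div_iff₀ hδ'pos] at h1
      simp only [htkdef]
      push_cast at h1 ⊢
      linarith [hcdef]
  have hKle : K ≤ m := hKdef ▸ min_le_left _ _
  have hδ'eq : δ' = δ / 2 := hδ'def
  have hKm : K < m := by
    by_contra h
    have hmem : m - 1 ∈ (range m).filter (fun k => tk (k + 1) ≤ c) := by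
      rw [hfilter]; exact mem_range.mpr (by omega)
    rw [mem_filter] at hmem
    have h2 : tk (m - 1 + 1) ≤ c := hmem.2
    have h3 : m - 1 + 1 = m := by omega
    rw [h3] at h2
    simp only [htkdef] at h2
    linarith [hcdef, hm2, htr, hδ'pos]
  have htKle : tk K ≤ t := by
    rcases Nat.eq_zero_or_pos K with h0 | h0
    · rw [h0]; simp only [htkdef]; push_cast; linarith
    · have hmem : K - 1 ∈ range K := mem_range.mpr (by omega)
      rw [← hfilter, mem_filter] at hmem
      have h2 := hmem.2
      have h3 : K - 1 + 1 = K := by omega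
      rw [h3] at h2
      linarith [hcdef, hδ'pos]
  have htKge : t - δ ≤ tk K := by
    have hKnot : K ∉ (range m).filter (fun k => tk (k + 1) ≤ c) := by
      rw [hfilter]; simp
    rw [mem_filter, mem_range] at hKnot
    push_neg at hKnot
    have h2 : c < tk (K + 1) := hKnot hKm
    have h3 : tk (K + 1) = tk K + δ' := by simp only [htkdef]; push_cast; ring
    linarith [hcdef, hδpos]
  have hCbound : |g (tk K) - g t| ≤ ε' := by
    have h1 := htk_mem K hKle
    have hd : dist (tk K) t ≤ δ0 := by
      rw [Real.dist_eq, abs_le]; constructor <;> linarith [hδδ0, hδpos]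
    simpa [Real.dist_eq] using hmod _ h1 _ htJ hd
  have htel : g (tk 0) + ∑ k ∈ range m, (g (tk (k + 1)) - g (tk k)) * χ (k + 1)
      = g (tk K) := by
    have h1 : ∑ k ∈ range m, (g (tk (k + 1)) - g (tk k)) * χ (k + 1)
        = ∑ k ∈ (range m).filter (fun k => tk (k + 1) ≤ c),
            (g (tk (k + 1)) - g (tk k)) := by
      rw [Finset.sum_filter]
      refine Finset.sum_congr rfl fun k _ => ?_
      simp only [hχdef]
      split <;> simp
    rw [h1, hfilter, Finset.sum_range_sub (fun k => g (tk k)) K]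
    ring
  -- bound A : constant term error
  have hA : |g (tk 0) * sigma (0 * t + S) - g (tk 0)| ≤ G * η := by
    have h1 : |sigma (0 * t + S) - 1| ≤ η := hStop _ (by rw [zero_mul, zero_add])
    have h2 := hGb _ (htk_mem 0 (by omega))
    calc |g (tk 0) * sigma (0 * t + S) - g (tk 0)|
        = |g (tk 0) * (sigma (0 * t + S) - 1)| := by ring_nf
      _ = |g (tk 0)| * |sigma (0 * t + S) - 1| := abs_mul _ _
      _ ≤ G * η := mul_le_mul h2 h1 (abs_nonneg _) hG0
  -- bound B : step error
  have hlamδ : lam0 * (δ' / 2) = S := by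
    rw [hlam0def]; field_simp
  have hB : |∑ k ∈ range m, (g (tk (k + 1)) - g (tk k)) *
        (sigma (lam0 * t + -(lam0 * tk (k + 1))) - χ (k + 1))|
      ≤ m * (2 * G * η) + ε' * (M + 1) := by
    classical
    set q : ℕ → Prop := fun k => |tk (k + 1) - t| < δ' / 2 with hqdef
    calc |∑ k ∈ range m, (g (tk (k + 1)) - g (tk k)) *
          (sigma (lam0 * t + -(lam0 * tk (k + 1))) - χ (k + 1))|
        ≤ ∑ k ∈ range m, |(g (tk (k + 1)) - g (tk k)) *
          (sigma (lam0 * t + -(lam0 * tk (k + 1))) - χ (k + 1))| :=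
          Finset.abs_sum_le_sum_abs _ _
      _ = (∑ k ∈ (range m).filter q, |(g (tk (k + 1)) - g (tk k)) *
            (sigma (lam0 * t + -(lam0 * tk (k + 1))) - χ (k + 1))|)
          + ∑ k ∈ (range m).filter (fun k => ¬ q k), |(g (tk (k + 1)) - g (tk k)) *
            (sigma (lam0 * t + -(lam0 * tk (k + 1))) - χ (k + 1))| :=
          (Finset.sum_filter_add_sum_filter_not _ _ _).symm
      _ ≤ ε' * (M + 1) + m * (2 * G * η) := ?_
      _ = m * (2 * G * η) + ε' * (M + 1) := by ring
    gcongr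
    · -- near part: at most one index
      have hcard : ((range m).filter q).card ≤ 1 := by
        rw [Finset.card_le_one]
        intro a ha b hb
        rw [mem_filter] at ha hb
        have ha2 := ha.2
        have hb2 := hb.2
        rw [hqdef] at ha2 hb2
        have h3 : tk (a + 1) - tk (b + 1) = ((a : ℝ) - b) * δ' := by
          simp only [htkdef]; push_cast; ring
        have h4 : |tk (a + 1) - tk (b + 1)| < δ' := by
          calc |tk (a + 1) - tk (b + 1)|
              = |(tk (a + 1) - t) - (tk (b + 1) - t)| := by ring_nf
            _ ≤ |tk (a + 1) - t| + |tk (b + 1) - t| := abs_sub _ _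
            _ < δ' := by linarith
        rw [h3, abs_mul, abs_of_pos hδ'pos] at h4
        have h5 : |(a : ℝ) - b| < 1 := by
          by_contra hcon
          push_neg at hcon
          nlinarith [hδ'pos]
        rcases abs_lt.mp h5 with ⟨h5a, h5b⟩
        have hz1 : (-1 : ℤ) < (a : ℤ) - b := by
          have : (-1 : ℝ) < (((a : ℤ) - b : ℤ) : ℝ) := by push_cast; linarith
          exact_mod_cast this
        have hz2 : ((a : ℤ) - b) < 1 := by
          have : ((((a : ℤ) - b : ℤ)) : ℝ) < 1 := by push_cast; linarith
          exact_mod_cast this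
        omega
      have hterm : ∀ k ∈ (range m).filter q, |(g (tk (k + 1)) - g (tk k)) *
            (sigma (lam0 * t + -(lam0 * tk (k + 1))) - χ (k + 1))| ≤ ε' * (M + 1) := by
        intro k hk
        rw [mem_filter, mem_range] at hk
        rw [abs_mul]
        have h1 : |sigma (lam0 * t + -(lam0 * tk (k + 1))) - χ (k + 1)| ≤ M + 1 := by
          have hχb : |χ (k + 1)| ≤ 1 := by
            simp only [hχdef]; split <;> simp
          calc |sigma (lam0 * t + -(lam0 * tk (k + 1))) - χ (k + 1)|
              ≤ |sigma (lam0 * t + -(lam0 * tk (k + 1)))| + |χ (k + 1)| := abs_sub _ _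
            _ ≤ M + 1 := add_le_add (hMb _) hχb
        exact mul_le_mul (hΔ k hk.1) h1 (abs_nonneg _) hε'.le
      calc (∑ k ∈ (range m).filter q, |(g (tk (k + 1)) - g (tk k)) *
            (sigma (lam0 * t + -(lam0 * tk (k + 1))) - χ (k + 1))|)
          ≤ ((range m).filter q).card • (ε' * (M + 1)) :=
            Finset.sum_le_card_nsmul _ _ _ hterm
        _ ≤ ε' * (M + 1) := by
            rw [nsmul_eq_mul]
            have hc1 : (((range m).filter q).card : ℝ) ≤ 1 := by exact_mod_cast hcard
            have hnn : (0 : ℝ) ≤ ε' * (M + 1) := by positivity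
            nlinarith [Finset.card_filter_le (range m) q]
    · -- far part
      have hterm : ∀ k ∈ (range m).filter (fun k => ¬ q k),
          |(g (tk (k + 1)) - g (tk k)) *
            (sigma (lam0 * t + -(lam0 * tk (k + 1))) - χ (k + 1))| ≤ 2 * G * η := by
        intro k hk
        rw [mem_filter, mem_range] at hk
        obtain ⟨hkm, hknq⟩ := hk
        simp only [hqdef, not_lt] at hknq
        rw [abs_mul]
        have harg : lam0 * t + -(lam0 * tk (k + 1)) = lam0 * (t - tk (k + 1)) := by ring
        have h1 : |sigma (lam0 * t + -(lam0 * tk (k + 1))) - χ (k + 1)| ≤ η := by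
          rcases le_abs.mp hknq with hcase | hcase
          · -- tk (k+1) ≥ t + δ'/2 : χ = 0, argument ≤ -S
            have hχ0 : χ (k + 1) = 0 := by
              simp only [hχdef]
              rw [if_neg (show ¬ tk (k + 1) ≤ c by push_neg; linarith [hcdef, hδ'pos])]
            have haS : lam0 * t + -(lam0 * tk (k + 1)) ≤ -S := by
              rw [harg, ← hlamδ]
              have : t - tk (k + 1) ≤ -(δ' / 2) := by linarith
              nlinarith [hlam0]
            rw [hχ0, sub_zero]
            exact hSbot _ haS
          · -- tk (k+1) ≤ t - δ'/2 : χ = 1, argument ≥ S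
            have hχ1 : χ (k + 1) = 1 := by
              simp only [hχdef]
              rw [if_pos (show tk (k + 1) ≤ c by linarith [hcdef])]
            have haS : S ≤ lam0 * t + -(lam0 * tk (k + 1)) := by
              rw [harg, ← hlamδ]
              have : δ' / 2 ≤ t - tk (k + 1) := by linarith
              nlinarith [hlam0]
            rw [hχ1]
            exact hStop _ haS
        exact mul_le_mul (hΔG k hkm) h1 (abs_nonneg _) (by positivity)
      calc (∑ k ∈ (range m).filter (fun k => ¬ q k), |(g (tk (k + 1)) - g (tk k)) *
            (sigma (lam0 * t + -(lam0 * tk (k + 1))) - χ (k + 1))|)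
          ≤ ((range m).filter (fun k => ¬ q k)).card • (2 * G * η) :=
            Finset.sum_le_card_nsmul _ _ _ hterm
        _ ≤ m * (2 * G * η) := by
            rw [nsmul_eq_mul]
            have hc := Finset.card_filter_le (range m) (fun k => ¬ q k)
            rw [Finset.card_range] at hc
            have : (((range m).filter (fun k => ¬ q k)).card : ℝ) ≤ m := by
              exact_mod_cast hc
            exact mul_le_mul_of_nonneg_right this (by positivity)
  -- assemble
  have hsplit : g (tk 0) * sigma (0 * t + S) +
      (∑ k ∈ range m, (g (tk (k + 1)) - g (tk k)) *
        sigma (lam0 * t + -(lam0 * tk (k + 1)))) - g t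
      = (g (tk 0) * sigma (0 * t + S) - g (tk 0))
      + (∑ k ∈ range m, (g (tk (k + 1)) - g (tk k)) *
          (sigma (lam0 * t + -(lam0 * tk (k + 1))) - χ (k + 1)))
      + (g (tk K) - g t) := by
    rw [← htel]
    simp only [mul_sub, Finset.sum_sub_distrib]
    ring
  rw [hsplit]
  have htotal : G * η + (m * (2 * G * η) + ε' * (M + 1)) + ε' ≤ ε := by
    have he1 : ε' * (3 * (M + 1)) = ε := by rw [hε'def]; field_simp
    have he2 : η * (3 * (m + 1) * (2 * G + 1)) = ε := by rw [hηdef]; field_simp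
    have hmc : (1 : ℝ) ≤ m := by exact_mod_cast hm1
    nlinarith [hη, hε', hG0, hM, hmc]
  calc |(g (tk 0) * sigma (0 * t + S) - g (tk 0))
      + (∑ k ∈ range m, (g (tk (k + 1)) - g (tk k)) *
          (sigma (lam0 * t + -(lam0 * tk (k + 1))) - χ (k + 1)))
      + (g (tk K) - g t)|
      ≤ |(g (tk 0) * sigma (0 * t + S) - g (tk 0))
      + (∑ k ∈ range m, (g (tk (k + 1)) - g (tk k)) *
          (sigma (lam0 * t + -(lam0 * tk (k + 1))) - χ (k + 1)))|
      + |g (tk K) - g t| := abs_add_le _ _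
    _ ≤ (|g (tk 0) * sigma (0 * t + S) - g (tk 0)|
      + |∑ k ∈ range m, (g (tk (k + 1)) - g (tk k)) *
          (sigma (lam0 * t + -(lam0 * tk (k + 1))) - χ (k + 1))|)
      + |g (tk K) - g t| := by gcongr; exact abs_add_le _ _
    _ ≤ G * η + (m * (2 * G * η) + ε' * (M + 1)) + ε' := by gcongr
    _ ≤ ε := htotal

/-- Uniform approximability on the unit cube by one-hidden-layer networks. -/
def UATApprox (n : ℕ) (sigma : ℝ → ℝ) (ε : ℝ) (h : (Fin n → ℝ) → ℝ) : Prop :=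
  ∃ (N : ℕ) (α : Fin N → ℝ) (w : Fin N → Fin n → ℝ) (b : Fin N → ℝ),
    ∀ x ∈ Set.Icc (0 : Fin n → ℝ) 1,
      |(∑ j : Fin N, α j * sigma ((∑ i : Fin n, w j i * x i) + b j)) - h x| ≤ ε

lemma UATApprox.congr {n : ℕ} {sigma : ℝ → ℝ} {ε : ℝ} {h₁ h₂ : (Fin n → ℝ) → ℝ}
    (he : ∀ x ∈ Set.Icc (0 : Fin n → ℝ) 1, h₁ x = h₂ x) (h : UATApprox n sigma ε h₁) :
    UATApprox n sigma ε h₂ := by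
  obtain ⟨N, α, w, b, hb⟩ := h
  exact ⟨N, α, w, b, fun x hx => (he x hx) ▸ hb x hx⟩

lemma UATApprox.mono {n : ℕ} {sigma : ℝ → ℝ} {ε ε' : ℝ} {h : (Fin n → ℝ) → ℝ}
    (hle : ε ≤ ε') (hh : UATApprox n sigma ε h) : UATApprox n sigma ε' h := by
  obtain ⟨N, α, w, b, hb⟩ := hh
  exact ⟨N, α, w, b, fun x hx => (hb x hx).trans hle⟩

lemma UATApprox.add {n : ℕ} {sigma : ℝ → ℝ} {ε₁ ε₂ : ℝ} {h₁ h₂ : (Fin n → ℝ) → ℝ}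
    (ha : UATApprox n sigma ε₁ h₁) (hb : UATApprox n sigma ε₂ h₂) :
    UATApprox n sigma (ε₁ + ε₂) (fun x => h₁ x + h₂ x) := by
  obtain ⟨N₁, α₁, w₁, b₁, h1⟩ := ha
  obtain ⟨N₂, α₂, w₂, b₂, h2⟩ := hb
  refine ⟨N₁ + N₂, Fin.append α₁ α₂, Fin.append w₁ w₂, Fin.append b₁ b₂, fun x hx => ?_⟩
  have key : (∑ j : Fin (N₁ + N₂), Fin.append α₁ α₂ j *
      sigma ((∑ i : Fin n, Fin.append w₁ w₂ j i * x i) + Fin.append b₁ b₂ j))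
      = (∑ j : Fin N₁, α₁ j * sigma ((∑ i : Fin n, w₁ j i * x i) + b₁ j))
      + (∑ j : Fin N₂, α₂ j * sigma ((∑ i : Fin n, w₂ j i * x i) + b₂ j)) := by
    rw [Fin.sum_univ_add]
    congr 1 <;> exact Finset.sum_congr rfl fun j _ => by
      simp [Fin.append_left, Fin.append_right]
  rw [key]
  calc |(∑ j : Fin N₁, α₁ j * sigma ((∑ i : Fin n, w₁ j i * x i) + b₁ j))
      + (∑ j : Fin N₂, α₂ j * sigma ((∑ i : Fin n, w₂ j i * x i) + b₂ j))
      - (h₁ x + h₂ x)|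
      ≤ |(∑ j : Fin N₁, α₁ j * sigma ((∑ i : Fin n, w₁ j i * x i) + b₁ j)) - h₁ x|
      + |(∑ j : Fin N₂, α₂ j * sigma ((∑ i : Fin n, w₂ j i * x i) + b₂ j)) - h₂ x| := by
        have := abs_add_le ((∑ j : Fin N₁, α₁ j * sigma ((∑ i : Fin n, w₁ j i * x i) + b₁ j)) - h₁ x)
          ((∑ j : Fin N₂, α₂ j * sigma ((∑ i : Fin n, w₂ j i * x i) + b₂ j)) - h₂ x)
        calc _ = |((∑ j : Fin N₁, α₁ j * sigma ((∑ i : Fin n, w₁ j i * x i) + b₁ j)) - h₁ x)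
            + ((∑ j : Fin N₂, α₂ j * sigma ((∑ i : Fin n, w₂ j i * x i) + b₂ j)) - h₂ x)| := by
              ring_nf
          _ ≤ _ := this
    _ ≤ ε₁ + ε₂ := add_le_add (h1 x hx) (h2 x hx)

lemma UATApprox.const_mul {n : ℕ} {sigma : ℝ → ℝ} {ε : ℝ} {h : (Fin n → ℝ) → ℝ}
    (c : ℝ) (hh : UATApprox n sigma ε h) :
    UATApprox n sigma (|c| * ε) (fun x => c * h x) := by
  obtain ⟨N, α, w, b, hb⟩ := hh
  refine ⟨N, fun j => c * α j, w, b, fun x hx => ?_⟩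
  have key : (∑ j : Fin N, (c * α j) * sigma ((∑ i : Fin n, w j i * x i) + b j))
      = c * ∑ j : Fin N, α j * sigma ((∑ i : Fin n, w j i * x i) + b j) := by
    rw [Finset.mul_sum]; exact Finset.sum_congr rfl fun j _ => by ring
  rw [key]
  calc |c * (∑ j : Fin N, α j * sigma ((∑ i : Fin n, w j i * x i) + b j)) - c * h x|
      = |c| * |(∑ j : Fin N, α j * sigma ((∑ i : Fin n, w j i * x i) + b j)) - h x| := by
        rw [← abs_mul]; ring_nf
    _ ≤ |c| * ε := mul_le_mul_of_nonneg_left (hb x hx) (abs_nonneg c)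

lemma UATApprox.ridge {n : ℕ} {sigma : ℝ → ℝ} (hσ_cont : Continuous sigma)
    (hσ_bot : Tendsto sigma atBot (nhds 0)) (hσ_top : Tendsto sigma atTop (nhds 1))
    (w : Fin n → ℝ) (g : ℝ → ℝ) (hg : Continuous g) (ε : ℝ) (hε : 0 < ε) :
    UATApprox n sigma ε (fun x => g (∑ i : Fin n, w i * x i)) := by
  set R : ℝ := (∑ i : Fin n, |w i|) + 1 with hRdef
  have hR : 0 < R := by positivity
  obtain ⟨N, α, lam, b, hb⟩ := one_dim sigma hσ_cont hσ_bot hσ_top g hg R hR ε hε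
  refine ⟨N, α, fun j i => lam j * w i, b, fun x hx => ?_⟩
  obtain ⟨hx0, hx1⟩ := hx
  have hxmem : (∑ i : Fin n, w i * x i) ∈ Set.Icc (-R) R := by
    have habs : |∑ i : Fin n, w i * x i| ≤ ∑ i : Fin n, |w i| := by
      calc |∑ i : Fin n, w i * x i| ≤ ∑ i : Fin n, |w i * x i| :=
          Finset.abs_sum_le_sum_abs _ _
        _ ≤ ∑ i : Fin n, |w i| := by
          refine Finset.sum_le_sum fun i _ => ?_
          rw [abs_mul]
          have h0 : (0:ℝ) ≤ x i := by simpa using hx0 i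
          have h2 : x i ≤ 1 := by simpa using hx1 i
          have h1 : |x i| ≤ 1 := by rw [abs_le]; exact ⟨by linarith, h2⟩
          nlinarith [abs_nonneg (w i)]
    rw [Set.mem_Icc]
    rcases abs_le.mp habs with ⟨hl, hr⟩
    constructor <;> [skip; skip] <;> simp only [hRdef] <;> linarith
  have key : ∀ j : Fin N, (∑ i : Fin n, (lam j * w i) * x i) + b j
      = lam j * (∑ i : Fin n, w i * x i) + b j := by
    intro j
    rw [Finset.mul_sum]
    congr 1
    exact Finset.sum_congr rfl fun i _ => by ring
  calc |(∑ j : Fin N, α j * sigma ((∑ i : Fin n, (lam j * w i) * x i) + b j))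
      - g (∑ i : Fin n, w i * x i)|
      = |(∑ j : Fin N, α j * sigma (lam j * (∑ i : Fin n, w i * x i) + b j))
      - g (∑ i : Fin n, w i * x i)| := by
        congr 2
        exact Finset.sum_congr rfl fun j _ => by rw [key j]
    _ ≤ ε := hb _ hxmem



/-- **Universal Approximation Theorem.**
Let `sigma : ℝ → ℝ` be a continuous sigmoidal function (tending to `0` at `-∞`
and to `1` at `+∞`).  Then every continuous function `f : [0,1]^n → ℝ` can be
uniformly approximated within any `ε > 0` by a one-hidden-layer MLP
`x ↦ ∑ j, α j * sigma (⟪w j, x⟫ + b j)`. -/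
theorem universal_approximation
    (n : ℕ) (sigma : ℝ → ℝ)
    (hσ_cont : Continuous sigma)
    (hσ_bot : Filter.Tendsto sigma Filter.atBot (nhds (0 : ℝ)))
    (hσ_top : Filter.Tendsto sigma Filter.atTop (nhds (1 : ℝ)))
    (f : (Fin n → ℝ) → ℝ)
    (hf : ContinuousOn f (Set.Icc (0 : Fin n → ℝ) 1))
    (ε : ℝ) (hε : 0 < ε) :
    ∃ (N : ℕ) (α : Fin N → ℝ) (w : Fin N → Fin n → ℝ) (b : Fin N → ℝ),
      ∀ x ∈ Set.Icc (0 : Fin n → ℝ) 1,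
        |(∑ j : Fin N, α j * sigma ((∑ i : Fin n, w j i * x i) + b j)) - f x| ≤ ε := by
  classical
  set K : Set (Fin n → ℝ) := Set.Icc 0 1 with hKdef
  haveI : CompactSpace ↥K := isCompact_iff_compactSpace.mp isCompact_Icc
  -- the exponential ridge functions
  let expw : (Fin n → ℝ) → C(↥K, ℝ) := fun w =>
    ⟨fun x => Real.exp (∑ i : Fin n, w i * (x : Fin n → ℝ) i), by
      apply Real.continuous_exp.comp
      exact continuous_finset_sum _ fun i _ =>
        continuous_const.mul ((continuous_apply i).comp continuous_subtype_val)⟩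
  have hexpw_apply : ∀ w x, expw w x = Real.exp (∑ i : Fin n, w i * (x : Fin n → ℝ) i) :=
    fun w x => rfl
  -- they form a submonoid
  let Esub : Submonoid C(↥K, ℝ) :=
    { carrier := Set.range expw
      one_mem' := ⟨0, by ext x; simp [hexpw_apply]⟩
      mul_mem' := by
        rintro a b ⟨v, rfl⟩ ⟨w, rfl⟩
        refine ⟨v + w, ?_⟩
        ext x
        simp only [hexpw_apply, ContinuousMap.mul_apply, Pi.add_apply, add_mul,
          Finset.sum_add_distrib, Real.exp_add] }
  -- Stone-Weierstrass
  set A : Subalgebra ℝ C(↥K, ℝ) := Algebra.adjoin ℝ (Set.range expw) with hAdef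
  have hsep : A.SeparatesPoints := by
    intro x y hxy
    have : ∃ i, (x : Fin n → ℝ) i ≠ (y : Fin n → ℝ) i := by
      by_contra hcon
      push_neg at hcon
      exact hxy (Subtype.ext (funext hcon))
    obtain ⟨i, hi⟩ := this
    refine ⟨expw (Pi.single i 1), ⟨expw (Pi.single i 1),
      Algebra.subset_adjoin ⟨Pi.single i 1, rfl⟩, rfl⟩, ?_⟩
    have hsum : ∀ z : ↥K, (∑ j : Fin n, (Pi.single i 1 : Fin n → ℝ) j * (z : Fin n → ℝ) j)
        = (z : Fin n → ℝ) i := by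
      intro z
      rw [Finset.sum_eq_single i]
      · simp
      · intro j _ hj; simp [Pi.single_apply, hj]
      · simp
    simp only [hexpw_apply, hsum]
    exact fun hcon => hi (Real.exp_injective hcon)
  obtain ⟨⟨g, hgA⟩, hgnear⟩ :=
    ContinuousMap.exists_mem_subalgebra_near_continuous_of_separatesPoints A hsep
      (fun x : ↥K => f x) hf.restrict (ε / 2) (by positivity)
  simp only at hgnear
  -- g lies in the span of the exponentials
  have hgspan : g ∈ Submodule.span ℝ (Set.range expw) := by
    have h1 : Subalgebra.toSubmodule (Algebra.adjoin ℝ (Set.range expw))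
        = Submodule.span ℝ (Submonoid.closure (Set.range expw) : Set C(↥K, ℝ)) :=
      Algebra.adjoin_eq_span ℝ (Set.range expw)
    have h2 : Submonoid.closure (Set.range expw) = Esub := Submonoid.closure_eq Esub
    rw [h2] at h1
    have h3 : g ∈ Subalgebra.toSubmodule A := hgA
    rw [hAdef, h1] at h3
    exact h3
  -- extension of elements of C(K, ℝ) to the whole space
  let extf : C(↥K, ℝ) → (Fin n → ℝ) → ℝ := fun u x =>
    if hx : x ∈ K then u ⟨x, hx⟩ else 0
  have hext_apply : ∀ (u : C(↥K, ℝ)) (x : Fin n → ℝ) (hx : x ∈ K), extf u x = u ⟨x, hx⟩ :=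
    fun u x hx => show (if hx' : x ∈ K then u ⟨x, hx'⟩ else 0) = u ⟨x, hx⟩ from dif_pos hx
  -- every element of the span is approximable
  have hspan_approx : ∀ u ∈ Submodule.span ℝ (Set.range expw),
      ∀ δ : ℝ, 0 < δ → UATApprox n sigma δ (extf u) := by
    intro u hu
    induction hu using Submodule.span_induction with
    | mem u hmem =>
      obtain ⟨w, rfl⟩ := hmem
      intro δ hδ
      refine UATApprox.congr (h₁ := fun x => Real.exp (∑ i : Fin n, w i * x i))
        (fun x hx => ?_) (UATApprox.ridge hσ_cont hσ_bot hσ_top w Real.exp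
          Real.continuous_exp δ hδ)
      rw [hext_apply _ _ hx, hexpw_apply]
    | zero =>
      intro δ hδ
      refine ⟨0, ![], ![], ![], fun x hx => ?_⟩
      rw [hext_apply _ _ hx]
      simp [hδ.le]
    | add u v hu hv ihu ihv =>
      intro δ hδ
      have h1 := (ihu (δ/2) (by positivity)).add (ihv (δ/2) (by positivity))
      refine UATApprox.congr (fun x hx => ?_) (h1.mono (by linarith))
      rw [hext_apply _ _ hx, hext_apply _ _ hx, hext_apply _ _ hx]
      simp
    | smul a u hu ihu =>
      intro δ hδ
      have h1 := UATApprox.const_mul a (ihu (δ / (|a| + 1)) (by positivity))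
      have h2 : |a| * (δ / (|a| + 1)) ≤ δ := by
        have h3 : (0:ℝ) < |a| + 1 := by positivity
        rw [mul_div_assoc', div_le_iff₀ h3]
        nlinarith [abs_nonneg a]
      refine UATApprox.congr (fun x hx => ?_) ((h1.mono h2))
      rw [hext_apply _ _ hx, hext_apply _ _ hx]
      simp [smul_eq_mul]
  obtain ⟨N, α, w, b, hnet⟩ := hspan_approx g hgspan (ε / 2) (by positivity)
  refine ⟨N, α, w, b, fun x hx => ?_⟩
  have h1 := hnet x hx
  have h2 : ‖g ⟨x, hx⟩ - f x‖ < ε / 2 := hgnear ⟨x, hx⟩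
  rw [Real.norm_eq_abs] at h2
  rw [hext_apply _ _ hx] at h1
  calc |(∑ j : Fin N, α j * sigma ((∑ i : Fin n, w j i * x i) + b j)) - f x|
      = |((∑ j : Fin N, α j * sigma ((∑ i : Fin n, w j i * x i) + b j)) - g ⟨x, hx⟩)
        + (g ⟨x, hx⟩ - f x)| := by congr 1; ring
    _ ≤ |(∑ j : Fin N, α j * sigma ((∑ i : Fin n, w j i * x i) + b j)) - g ⟨x, hx⟩|
        + |g ⟨x, hx⟩ - f x| := abs_add_le _ _
    _ ≤ ε / 2 + ε / 2 := add_le_add h1 h2.le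
    _ = ε := by ring
end

section
/- For every iteration k there exists a function g : X → X such that h^k = g ∘ l^k and g is injective on the range of l^k; that is, the GNN node representations at iteration k are obtained from the WL node labels at iteration k by a map that is injective on the labels that actually occur. -/
/-- The Weisfeiler–Lehman iteration: `l^{k+1}(v) = φ̂(l^k(v), {{ l^k(u) : u ∈ N(v) }})`. -/
def wlIter {V X : Type*} (N : V → Finset V) (phiHat : X × Multiset X → X)
    (l0 : V → X) : ℕ → V → X
  | 0 => l0
  | k + 1 => fun v =>
      phiHat (wlIter N phiHat l0 k v, (N v).val.map (wlIter N phiHat l0 k))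

/-- The GNN iteration with neighborhood aggregation `φ` and update `ψ`:
`h^{k+1}(v) = ψ(h^k(v), φ({{ h^k(u) : u ∈ N(v) }}))`. -/
def gnnIter {V X : Type*} (N : V → Finset V) (psi : X × X → X)
    (phi : Multiset X → X) (h0 : V → X) : ℕ → V → X
  | 0 => h0
  | k + 1 => fun v =>
      psi (gnnIter N psi phi h0 k v, phi ((N v).val.map (gnnIter N psi phi h0 k)))

lemma multiset_map_injOn {α β : Type*} {g : α → β} {S : Set α} (hg : Set.InjOn g S) :
    ∀ (s t : Multiset α), (∀ x ∈ s, x ∈ S) → (∀ x ∈ t, x ∈ S) →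
      s.map g = t.map g → s = t := by
  intro s
  induction s using Multiset.induction with
  | empty =>
    intro t _ _ h
    simpa [eq_comm, Multiset.map_eq_zero] using h.symm
  | cons a s ih =>
    intro t hs ht h
    have hga : g a ∈ t.map g := by rw [← h]; simp
    obtain ⟨b, hb, hgb⟩ := Multiset.mem_map.mp hga
    have hab : a = b := hg (hs a (by simp)) (ht b hb) hgb.symm
    subst hab
    obtain ⟨t', rfl⟩ := Multiset.exists_cons_of_mem hb
    simp only [Multiset.map_cons] at h
    have h' : s.map g = t'.map g := (Multiset.cons_inj_right _).mp h
    have : s = t' := ih t' (fun x hx => hs x (Multiset.mem_cons_of_mem hx))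
      (fun x hx => ht x (Multiset.mem_cons_of_mem hx)) h'
    rw [this]

/-- For every iteration `k` there is a map `g : X → X` with `h^k = g ∘ l^k`
which is injective on the range of `l^k`: the GNN node representations at
iteration `k` are obtained from the WL node labels at iteration `k` by a map
that is injective on the labels that actually occur. -/
theorem gnn_eq_injective_map_of_wl
    {V X : Type*} [Fintype V]
    (N : V → Finset V)
    (phiHat : X × Multiset X → X) (hphiHat : Function.Injective phiHat)
    (psi : X × X → X) (hpsi : Function.Injective psi)
    (phi : Multiset X → X) (hphi : Function.Injective phi)
    (l0 : V → X) (k : ℕ) :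
    ∃ g : X → X,
      (∀ v : V, gnnIter N psi phi l0 k v = g (wlIter N phiHat l0 k v)) ∧
        Set.InjOn g (Set.range (wlIter N phiHat l0 k)) := by
  classical
  induction k with
  | zero => exact ⟨id, fun v => rfl, Function.injective_id.injOn⟩
  | succ k ih =>
    obtain ⟨g, hg1, hg2⟩ := ih
    set L := wlIter N phiHat l0 with hL
    set H := gnnIter N psi phi l0 with hH
    have mapeq : ∀ v : V, ((N v).val.map (L k)).map g = (N v).val.map (H k) := by
      intro v
      rw [Multiset.map_map]
      exact Multiset.map_congr rfl fun u _ => (hg1 u).symm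
    have key : ∀ v w : V, L (k+1) v = L (k+1) w → H (k+1) v = H (k+1) w := by
      intro v w h
      have h0 : phiHat (L k v, (N v).val.map (L k))
          = phiHat (L k w, (N w).val.map (L k)) := h
      have h' := hphiHat h0
      have h1 : L k v = L k w := congrArg Prod.fst h'
      have h2 : ((N v).val.map (L k)) = ((N w).val.map (L k)) := congrArg Prod.snd h'
      show psi (H k v, phi ((N v).val.map (H k))) = psi (H k w, phi ((N w).val.map (H k)))
      have e1 : H k v = H k w := by rw [hg1, hg1, h1]
      have e2 : (N v).val.map (H k) = (N w).val.map (H k) := by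
        rw [← mapeq, ← mapeq, h2]
      rw [e1, e2]
    refine ⟨fun x => if h : ∃ v, L (k+1) v = x then H (k+1) h.choose else x, ?_, ?_⟩
    · intro v
      have hex : ∃ w, L (k+1) w = L (k+1) v := ⟨v, rfl⟩
      simp only [dif_pos hex]
      exact (key _ _ hex.choose_spec).symm
    · rintro x ⟨v, rfl⟩ y ⟨w, rfl⟩ hxy
      have hev : ∃ u, L (k+1) u = L (k+1) v := ⟨v, rfl⟩
      have hew : ∃ u, L (k+1) u = L (k+1) w := ⟨w, rfl⟩
      simp only [dif_pos hev, dif_pos hew] at hxy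
      have hvw : H (k+1) v = H (k+1) w :=
        (key _ _ hev.choose_spec).symm.trans (hxy.trans (key _ _ hew.choose_spec))
      have hvw' : psi (H k v, phi ((N v).val.map (H k)))
          = psi (H k w, phi ((N w).val.map (H k))) := hvw
      have h' := hpsi hvw'
      have h1 : H k v = H k w := congrArg Prod.fst h'
      have h2 : phi ((N v).val.map (H k)) = phi ((N w).val.map (H k)) :=
        congrArg Prod.snd h'
      have h2' := hphi h2
      have hl1 : L k v = L k w := hg2 ⟨v, rfl⟩ ⟨w, rfl⟩ (by rw [← hg1, ← hg1, h1])
      have hl2 : (N v).val.map (L k) = (N w).val.map (L k) := by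
        apply multiset_map_injOn hg2
        · intro x hx; obtain ⟨u, _, rfl⟩ := Multiset.mem_map.mp hx; exact ⟨u, rfl⟩
        · intro x hx; obtain ⟨u, _, rfl⟩ := Multiset.mem_map.mp hx; exact ⟨u, rfl⟩
        · rw [mapeq, mapeq, h2']
      show phiHat (L k v, (N v).val.map (L k)) = phiHat (L k w, (N w).val.map (L k))
      rw [hl1, hl2]
end

section
/- For every iteration k and all vertices u, v ∈ V, the GNN representations agree exactly when the WL labels agree: h^k(u) = h^k(v) if and only if l^k(u) = l^k(v). In particular, a GNN whose aggregation and update functions are injective distinguishes exactly the same pairs of nodes as the WL isomorphism test. -/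
lemma map_eq_map_iff_of_iff {V X : Type*} {f g : V → X}
    (h : ∀ a b, f a = f b ↔ g a = g b) (s t : Multiset V) :
    s.map f = t.map f ↔ s.map g = t.map g := by
  rw [← Multiset.rel_eq, ← Multiset.rel_eq, Multiset.rel_map, Multiset.rel_map]
  constructor
  · exact fun hr => hr.mono (fun a _ b _ hab => (h a b).mp hab)
  · exact fun hr => hr.mono (fun a _ b _ hab => (h a b).mpr hab)

/-- A GNN whose aggregation and update functions are injective distinguishes
exactly the same pairs of nodes as the WL isomorphism test: for every `k` and
all vertices `u, v`, `h^k(u) = h^k(v) ↔ l^k(u) = l^k(v)`. -/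
theorem gnn_distinguishes_iff_wl
    {V X : Type*} [Fintype V]
    (N : V → Finset V)
    (phiHat : X × Multiset X → X) (hphiHat : Function.Injective phiHat)
    (psi : X × X → X) (hpsi : Function.Injective psi)
    (phi : Multiset X → X) (hphi : Function.Injective phi)
    (l0 : V → X) (k : ℕ) (u v : V) :
    gnnIter N psi phi l0 k u = gnnIter N psi phi l0 k v ↔
      wlIter N phiHat l0 k u = wlIter N phiHat l0 k v := by
  induction k generalizing u v with
  | zero => simp [gnnIter, wlIter]
  | succ k ih =>
    simp only [gnnIter, wlIter]
    rw [hpsi.eq_iff, hphiHat.eq_iff, Prod.mk.injEq, Prod.mk.injEq, hphi.eq_iff]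
    rw [ih u v, map_eq_map_iff_of_iff ih]
end

section
/- Suppose the vertex set is a disjoint union V = V₁ ⊕ V₂ and the neighborhood map N respects the two parts (every neighbor of a vertex of V₁ lies in V₁, and every neighbor of a vertex of V₂ lies in V₂). If at some iteration k the multiset of WL labels over V₁ differs from the multiset of WL labels over V₂, then for any injective readout function R : Multiset X → Y, the GNN graph-level representations differ: R(multiset of h^k(v) for v ∈ V₁) ≠ R(multiset of h^k(v) for v ∈ V₂). In other words, a GNN with injective aggregation, update, and readout is as powerful as the WL isomorphism test at distinguishing the two graphs. -/
theorem wl_factors_gnn {V X : Type*} [Nonempty X] (N : V → Finset V)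
    (phiHat : X × Multiset X → X)
    (psi : X × X → X) (hpsi : Function.Injective psi)
    (phi : Multiset X → X) (hphi : Function.Injective phi)
    (l0 : V → X) (k : ℕ) :
    ∃ f : X → X, ∀ v, wlIter N phiHat l0 k v = f (gnnIter N psi phi l0 k v) := by
  induction k with
  | zero => exact ⟨id, fun v => rfl⟩
  | succ k ih =>
    obtain ⟨f, hf⟩ := ih
    refine ⟨fun x => phiHat ((f (Function.invFun psi x).1),
      (Function.invFun phi (Function.invFun psi x).2).map f), fun v => ?_⟩
    simp only [wlIter, gnnIter]
    rw [Function.leftInverse_invFun hpsi, Function.leftInverse_invFun hphi,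
      Multiset.map_map]
    have hfun : (wlIter N phiHat l0 k) = fun u => f (gnnIter N psi phi l0 k u) :=
      funext hf
    rw [hfun]
    rfl

/-- A GNN with injective aggregation, update, and readout is as powerful as the
WL isomorphism test at distinguishing two graphs: if the vertex set is a disjoint
union `V₁ ⊕ V₂` whose neighborhood map respects the two parts, and at some
iteration `k` the multiset of WL labels over `V₁` differs from that over `V₂`,
then for any injective readout `R` the GNN graph-level representations differ. -/
theorem gnn_graph_repr_ne_of_wl_multiset_ne
    {V₁ V₂ X Y : Type*} [Fintype V₁] [Fintype V₂]
    (N : V₁ ⊕ V₂ → Finset (V₁ ⊕ V₂))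
    (hN₁ : ∀ (v : V₁) (u : V₁ ⊕ V₂), u ∈ N (Sum.inl v) → ∃ w : V₁, u = Sum.inl w)
    (hN₂ : ∀ (v : V₂) (u : V₁ ⊕ V₂), u ∈ N (Sum.inr v) → ∃ w : V₂, u = Sum.inr w)
    (phiHat : X × Multiset X → X) (hphiHat : Function.Injective phiHat)
    (psi : X × X → X) (hpsi : Function.Injective psi)
    (phi : Multiset X → X) (hphi : Function.Injective phi)
    (R : Multiset X → Y) (hR : Function.Injective R)
    (l0 : V₁ ⊕ V₂ → X) (k : ℕ)
    (hwl : (Finset.univ.val.map fun v : V₁ => wlIter N phiHat l0 k (Sum.inl v)) ≠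
           (Finset.univ.val.map fun v : V₂ => wlIter N phiHat l0 k (Sum.inr v))) :
    R (Finset.univ.val.map fun v : V₁ => gnnIter N psi phi l0 k (Sum.inl v)) ≠
      R (Finset.univ.val.map fun v : V₂ => gnnIter N psi phi l0 k (Sum.inr v)) := by
  intro h
  have hX : Nonempty X := by
    by_contra hempty
    apply hwl
    have h1 : (Finset.univ.val.map fun v : V₁ => wlIter N phiHat l0 k (Sum.inl v)) = 0 := by
      by_contra h0
      obtain ⟨x, -⟩ := Multiset.exists_mem_of_ne_zero h0
      exact hempty ⟨x⟩
    have h2 : (Finset.univ.val.map fun v : V₂ => wlIter N phiHat l0 k (Sum.inr v)) = 0 := by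
      by_contra h0
      obtain ⟨x, -⟩ := Multiset.exists_mem_of_ne_zero h0
      exact hempty ⟨x⟩
    rw [h1, h2]
  obtain ⟨f, hf⟩ := wl_factors_gnn N phiHat psi hpsi phi hphi l0 k
  have hmul := hR h
  apply hwl
  have h1 : (Finset.univ.val.map fun v : V₁ => wlIter N phiHat l0 k (Sum.inl v)) =
      (Finset.univ.val.map fun v : V₁ => gnnIter N psi phi l0 k (Sum.inl v)).map f := by
    rw [Multiset.map_map]
    exact Multiset.map_congr rfl fun v _ => hf _
  have h2 : (Finset.univ.val.map fun v : V₂ => wlIter N phiHat l0 k (Sum.inr v)) =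
      (Finset.univ.val.map fun v : V₂ => gnnIter N psi phi l0 k (Sum.inr v)).map f := by
    rw [Multiset.map_map]
    exact Multiset.map_congr rfl fun v _ => hf _
  rw [h1, h2, hmul]
end
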